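/- The RSK shape datum is a bijection. Fix partitions μ and ν. The map sending a pair (λ, m), where λ is a partition with λ ≤ₕ μ and λ ≤ₕ ν and m ∈ ℕ, to the sequence κ defined by κ 0 := m + max(μ 0, ν 0) and κ (i+1) := min(μ i, ν i) − λ i + max(μ (i+1), ν (i+1)), is a bijection from the set {(λ, m) : λ a partition with λ ≤ₕ μ and λ ≤ₕ ν, m ∈ ℕ} onto the set {κ : κ a partition with μ ≤ₕ κ and ν ≤ₕ κ}. -/
import Mathlib


/-- A partition: weakly decreasing function `ℕ → ℕ` that is eventually zero. -/
def IsPartition (f : ℕ → ℕ) : Prop :=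
  (∀ i, f (i + 1) ≤ f i) ∧ ∃ N, ∀ i, N ≤ i → f i = 0

/-- The size `|f|` of an eventually-zero function, as a finite sum. -/
noncomputable def psize (f : ℕ → ℕ) : ℕ := ∑ᶠ i, f i

/-- `HStrip a b` means `b/a` is a horizontal strip (written `a ≤ₕ b`). -/
def HStrip (a b : ℕ → ℕ) : Prop := ∀ i, a i ≤ b i ∧ b (i + 1) ≤ a i

/-- `VStrip a b` means `b/a` is a vertical strip (written `a ≤ᵥ b`). -/
def VStrip (a b : ℕ → ℕ) : Prop := ∀ i, a i ≤ b i ∧ b i ≤ a i + 1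

/-- The Young diagram (cell set) of a partition. -/
def cells (f : ℕ → ℕ) : Set (ℕ × ℕ) := {p | p.2 < f p.1}

/-- The transpose partition. -/
noncomputable def ptranspose (f : ℕ → ℕ) : ℕ → ℕ := fun j => {i : ℕ | j < f i}.ncard

/-- The set `S(μ,ν)` of optional squares for the intermediate shape. -/
def Sset (mu nu : ℕ → ℕ) : Set (ℕ × ℕ) :=
  {p | mu p.1 = p.2 + 1 ∧ ptranspose nu p.2 = p.1 + 1}

/-- The set `T(μ,ν)` of optional squares for the resulting shape. -/
def Tset (mu nu : ℕ → ℕ) : Set (ℕ × ℕ) :=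
  {p | ptranspose mu p.2 = p.1 ∧ nu p.1 = p.2}

/-- The Burge relations for `(λ, μ, ν, m)` satisfied by a pair `(κ, c)`,
with the convention `c (-1) = 0`. -/
def BurgeRel (lam mu nu : ℕ → ℕ) (m : ℕ) (kap c : ℕ → ℕ) : Prop :=
  (c 0 + mu 0 + nu 0 = lam 0 + kap 0) ∧
  (∀ i, c (i + 1) + mu (i + 1) + nu (i + 1) = lam (i + 1) + kap (i + 1) + c i) ∧
  (∀ i, kap (i + 1) ≤ lam i) ∧
  (∀ i, 0 < c i → kap (i + 1) = lam i) ∧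
  (∃ N, ∀ i, N ≤ i → c i = m)

/-- The RSK shape datum is a bijection. -/
theorem rsk_shape_datum_bijective (mu nu : ℕ → ℕ)
    (hmu : IsPartition mu) (hnu : IsPartition nu) :
    Set.BijOn
      (fun p : (ℕ → ℕ) × ℕ => fun i : ℕ => match i with
        | 0 => p.2 + max (mu 0) (nu 0)
        | Nat.succ j => min (mu j) (nu j) - p.1 j + max (mu (j + 1)) (nu (j + 1)))
      {p : (ℕ → ℕ) × ℕ | IsPartition p.1 ∧ HStrip p.1 mu ∧ HStrip p.1 nu}
      {kap : ℕ → ℕ | IsPartition kap ∧ HStrip mu kap ∧ HStrip nu kap} := by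
  obtain ⟨hmudec, Nm, hNm⟩ := hmu
  obtain ⟨hnudec, Nn, hNn⟩ := hnu
  refine ⟨?_, ?_, ?_⟩
  · -- MapsTo
    rintro ⟨lam, m⟩ ⟨⟨hdec, Nl, hNl⟩, hm, hn⟩
    have hm1 : ∀ i, lam i ≤ mu i := fun i => (hm i).1
    have hm2 : ∀ i, mu (i + 1) ≤ lam i := fun i => (hm i).2
    have hn1 : ∀ i, lam i ≤ nu i := fun i => (hn i).1
    have hn2 : ∀ i, nu (i + 1) ≤ lam i := fun i => (hn i).2
    refine ⟨⟨?_, ?_⟩, ?_, ?_⟩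
    · intro i
      match i with
      | 0 =>
        show min (mu 0) (nu 0) - lam 0 + max (mu 1) (nu 1) ≤ m + max (mu 0) (nu 0)
        have h1 : lam 0 ≤ mu 0 := hm1 0
        have h2 : lam 0 ≤ nu 0 := hn1 0
        have h3 : mu 1 ≤ lam 0 := hm2 0
        have h4 : nu 1 ≤ lam 0 := hn2 0
        omega
      | Nat.succ j =>
        show min (mu (j+1)) (nu (j+1)) - lam (j+1) + max (mu (j+2)) (nu (j+2)) ≤
          min (mu j) (nu j) - lam j + max (mu (j+1)) (nu (j+1))
        have h1 : lam j ≤ mu j := hm1 j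
        have h2 : lam j ≤ nu j := hn1 j
        have h3 : mu (j+1) ≤ lam j := hm2 j
        have h4 : nu (j+1) ≤ lam j := hn2 j
        have h5 : lam (j+1) ≤ mu (j+1) := hm1 (j+1)
        have h6 : lam (j+1) ≤ nu (j+1) := hn1 (j+1)
        have h7 : mu (j+2) ≤ lam (j+1) := hm2 (j+1)
        have h8 : nu (j+2) ≤ lam (j+1) := hn2 (j+1)
        omega
    · refine ⟨Nm + Nn + 1, fun i hi => ?_⟩
      match i with
      | Nat.succ j =>
        show min (mu j) (nu j) - lam j + max (mu (j+1)) (nu (j+1)) = 0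
        have h1 : mu j = 0 := hNm j (by omega)
        have h2 : nu j = 0 := hNn j (by omega)
        have h3 : mu (j+1) = 0 := hNm (j+1) (by omega)
        have h4 : nu (j+1) = 0 := hNn (j+1) (by omega)
        omega
    · intro i
      match i with
      | 0 =>
        constructor
        · show mu 0 ≤ m + max (mu 0) (nu 0); omega
        · show min (mu 0) (nu 0) - lam 0 + max (mu 1) (nu 1) ≤ mu 0
          have h1 : lam 0 ≤ mu 0 := hm1 0
          have h2 : lam 0 ≤ nu 0 := hn1 0
          have h3 : mu 1 ≤ lam 0 := hm2 0
          have h4 : nu 1 ≤ lam 0 := hn2 0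
          omega
      | Nat.succ j =>
        constructor
        · show mu (j+1) ≤ min (mu j) (nu j) - lam j + max (mu (j+1)) (nu (j+1))
          have h1 : lam j ≤ mu j := hm1 j
          have h2 : lam j ≤ nu j := hn1 j
          omega
        · show min (mu (j+1)) (nu (j+1)) - lam (j+1) + max (mu (j+2)) (nu (j+2)) ≤ mu (j+1)
          have h1 : lam (j+1) ≤ mu (j+1) := hm1 (j+1)
          have h2 : lam (j+1) ≤ nu (j+1) := hn1 (j+1)
          have h3 : mu (j+2) ≤ lam (j+1) := hm2 (j+1)
          have h4 : nu (j+2) ≤ lam (j+1) := hn2 (j+1)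
          omega
    · intro i
      match i with
      | 0 =>
        constructor
        · show nu 0 ≤ m + max (mu 0) (nu 0); omega
        · show min (mu 0) (nu 0) - lam 0 + max (mu 1) (nu 1) ≤ nu 0
          have h1 : lam 0 ≤ mu 0 := hm1 0
          have h2 : lam 0 ≤ nu 0 := hn1 0
          have h3 : mu 1 ≤ lam 0 := hm2 0
          have h4 : nu 1 ≤ lam 0 := hn2 0
          omega
      | Nat.succ j =>
        constructor
        · show nu (j+1) ≤ min (mu j) (nu j) - lam j + max (mu (j+1)) (nu (j+1))
          have h1 : lam j ≤ mu j := hm1 j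
          have h2 : lam j ≤ nu j := hn1 j
          omega
        · show min (mu (j+1)) (nu (j+1)) - lam (j+1) + max (mu (j+2)) (nu (j+2)) ≤ nu (j+1)
          have h1 : lam (j+1) ≤ mu (j+1) := hm1 (j+1)
          have h2 : lam (j+1) ≤ nu (j+1) := hn1 (j+1)
          have h3 : mu (j+2) ≤ lam (j+1) := hm2 (j+1)
          have h4 : nu (j+2) ≤ lam (j+1) := hn2 (j+1)
          omega
  · -- InjOn
    rintro ⟨lam, m⟩ ⟨⟨hdec, Nl, hNl⟩, hm, hn⟩ ⟨lam', m'⟩ ⟨⟨hdec', Nl', hNl'⟩, hm', hn'⟩ heq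
    have hm1 : ∀ i, lam i ≤ mu i := fun i => (hm i).1
    have hn1 : ∀ i, lam i ≤ nu i := fun i => (hn i).1
    have hm1' : ∀ i, lam' i ≤ mu i := fun i => (hm' i).1
    have hn1' : ∀ i, lam' i ≤ nu i := fun i => (hn' i).1
    have h0 : m + max (mu 0) (nu 0) = m' + max (mu 0) (nu 0) := congrFun heq 0
    have hs : ∀ i, min (mu i) (nu i) - lam i + max (mu (i+1)) (nu (i+1)) =
        min (mu i) (nu i) - lam' i + max (mu (i+1)) (nu (i+1)) :=
      fun i => congrFun heq (i + 1)
    have hmm : m = m' := by omega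
    have hl : lam = lam' := by
      funext i
      have h1 : lam i ≤ mu i := hm1 i
      have h2 : lam i ≤ nu i := hn1 i
      have h3 : lam' i ≤ mu i := hm1' i
      have h4 : lam' i ≤ nu i := hn1' i
      have h5 := hs i
      omega
    simp [hmm, hl]
  · -- SurjOn
    rintro kap ⟨⟨hkdec, Nk, hNk⟩, hmk, hnk⟩
    have hmk1 : ∀ i, mu i ≤ kap i := fun i => (hmk i).1
    have hmk2 : ∀ i, kap (i + 1) ≤ mu i := fun i => (hmk i).2
    have hnk1 : ∀ i, nu i ≤ kap i := fun i => (hnk i).1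
    have hnk2 : ∀ i, kap (i + 1) ≤ nu i := fun i => (hnk i).2
    refine ⟨⟨fun i => min (mu i) (nu i) - (kap (i+1) - max (mu (i+1)) (nu (i+1))),
      kap 0 - max (mu 0) (nu 0)⟩, ⟨⟨⟨?_, ?_⟩, ?_, ?_⟩, ?_⟩⟩
    · intro i
      show min (mu (i+1)) (nu (i+1)) - (kap (i+2) - max (mu (i+2)) (nu (i+2))) ≤
        min (mu i) (nu i) - (kap (i+1) - max (mu (i+1)) (nu (i+1)))
      have h1 : mu (i+1) ≤ kap (i+1) := hmk1 (i+1)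
      have h2 : nu (i+1) ≤ kap (i+1) := hnk1 (i+1)
      have h3 : kap (i+1) ≤ mu i := hmk2 i
      have h4 : kap (i+1) ≤ nu i := hnk2 i
      have h5 : mu (i+2) ≤ kap (i+2) := hmk1 (i+2)
      have h6 : nu (i+2) ≤ kap (i+2) := hnk1 (i+2)
      have h7 : kap (i+2) ≤ mu (i+1) := hmk2 (i+1)
      have h8 : kap (i+2) ≤ nu (i+1) := hnk2 (i+1)
      omega
    · refine ⟨Nm + Nn, fun i hi => ?_⟩
      show min (mu i) (nu i) - (kap (i+1) - max (mu (i+1)) (nu (i+1))) = 0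
      have h1 : mu i = 0 := hNm i (by omega)
      have h2 : nu i = 0 := hNn i (by omega)
      omega
    · intro i
      constructor
      · show min (mu i) (nu i) - (kap (i+1) - max (mu (i+1)) (nu (i+1))) ≤ mu i
        omega
      · show mu (i+1) ≤ min (mu i) (nu i) - (kap (i+1) - max (mu (i+1)) (nu (i+1)))
        have h1 : kap (i+1) ≤ mu i := hmk2 i
        have h2 : kap (i+1) ≤ nu i := hnk2 i
        have h3 : mu (i+1) ≤ kap (i+1) := hmk1 (i+1)
        have h4 : nu (i+1) ≤ kap (i+1) := hnk1 (i+1)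
        omega
    · intro i
      constructor
      · show min (mu i) (nu i) - (kap (i+1) - max (mu (i+1)) (nu (i+1))) ≤ nu i
        omega
      · show nu (i+1) ≤ min (mu i) (nu i) - (kap (i+1) - max (mu (i+1)) (nu (i+1)))
        have h1 : kap (i+1) ≤ mu i := hmk2 i
        have h2 : kap (i+1) ≤ nu i := hnk2 i
        have h3 : mu (i+1) ≤ kap (i+1) := hmk1 (i+1)
        have h4 : nu (i+1) ≤ kap (i+1) := hnk1 (i+1)
        omega
    · funext i
      match i with
      | 0 =>
        show kap 0 - max (mu 0) (nu 0) + max (mu 0) (nu 0) = kap 0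
        have h1 : mu 0 ≤ kap 0 := hmk1 0
        have h2 : nu 0 ≤ kap 0 := hnk1 0
        omega
      | Nat.succ j =>
        show min (mu j) (nu j) -
            (min (mu j) (nu j) - (kap (j+1) - max (mu (j+1)) (nu (j+1)))) +
            max (mu (j+1)) (nu (j+1)) = kap (j+1)
        have h1 : kap (j+1) ≤ mu j := hmk2 j
        have h2 : kap (j+1) ≤ nu j := hnk2 j
        have h3 : mu (j+1) ≤ kap (j+1) := hmk1 (j+1)
        have h4 : nu (j+1) ≤ kap (j+1) := hnk1 (j+1)
        omega
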